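/- arXiv:2507.09156 — 3 statements merged into one kernel-verified Lean document; each statement's English description precedes it below -/
import Mathlib

section
/- Let F and G be distributions on ℝ^p with finite first moments, with X, X' i.i.d. from G and Y, Y' i.i.d. from F. Then the energy distance E(F,G) = 2·E‖X−Y‖₂ − E‖Y−Y'‖₂ − E‖X−X'‖₂ is nonnegative. -/
/-!
On `ℝ`, writing `|a - b|` as the length of the interval between `a` and `b` gives
`E|X - Y| = ∫ (F_X (1 - F_Y) + (1 - F_X) F_Y) dt`, so the energy inequality holds pointwise in `t`:
it reduces to `(F_X(t) - F_Y(t))² ≥ 0`, a rearrangement inequality. In a finite-dimensional inner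
product space, rotation invariance makes `‖z‖` proportional to the average of `|⟪w, z⟫|` over the
unit ball, so the energy of two distributions is an average of the energies of their
one-dimensional projections `⟪w, ·⟫`, each of which is nonnegative.
-/

open MeasureTheory Set Metric
open scoped ENNReal RealInnerProductSpace

theorem mul_add_mul_le_mul_add_mul_of_canonicallyOrderedAdd {R : Type*} [CommSemiring R]
    [PartialOrder R] [CanonicallyOrderedAdd R] {a b c d : R} (hab : a ≤ b) (hcd : c ≤ d) :
    a * d + b * c ≤ a * c + b * d := by
  obtain ⟨δ, rfl⟩ := exists_add_of_le hab
  obtain ⟨ε, rfl⟩ := exists_add_of_le hcd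
  calc a * (c + ε) + (a + δ) * c ≤ a * (c + ε) + (a + δ) * c + δ * ε := le_self_add
    _ = a * c + (a + δ) * (c + ε) := by ring

theorem measure_mul_measure_compl_add_le {α : Type*} [MeasurableSpace α] (μ ν : Measure α)
    [IsProbabilityMeasure μ] [IsProbabilityMeasure ν] {s : Set α} (hs : MeasurableSet s) :
    μ s * μ sᶜ + ν s * ν sᶜ ≤ μ s * ν sᶜ + ν s * μ sᶜ := by
  wlog h : μ s ≤ ν s generalizing μ ν
  · rw [add_comm (μ s * _), add_comm (μ s * _)]
    exact this ν μ (le_of_not_ge h)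
  have hc : ν sᶜ ≤ μ sᶜ := by
    rw [prob_compl_eq_one_sub hs, prob_compl_eq_one_sub hs]
    exact tsub_le_tsub_left h 1
  exact mul_add_mul_le_mul_add_mul_of_canonicallyOrderedAdd h hc

section MeanEDist

variable {α : Type*} [PseudoEMetricSpace α] [MeasurableSpace α]

/-- Working in `ℝ≥0∞` postpones every integrability condition to the final conversion. -/
noncomputable def meanEDist (μ ν : Measure α) : ℝ≥0∞ :=
  ∫⁻ x, ∫⁻ y, edist x y ∂ν ∂μ

variable [OpensMeasurableSpace α] [SecondCountableTopology α]

theorem meanEDist_eq_lintegral_prod (μ ν : Measure α) [SFinite ν] :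
    meanEDist μ ν = ∫⁻ q, edist q.1 q.2 ∂(μ.prod ν) :=
  (lintegral_prod _ measurable_edist.aemeasurable).symm

theorem meanEDist_map {β : Type*} [MeasurableSpace β] {f : β → α} (hf : Measurable f)
    (μ ν : Measure β) [SFinite μ] [SFinite ν] :
    meanEDist (μ.map f) (ν.map f) = ∫⁻ q, edist (f q.1) (f q.2) ∂(μ.prod ν) := by
  rw [meanEDist_eq_lintegral_prod, Measure.map_prod_map _ _ hf hf,
    lintegral_map measurable_edist (hf.prodMap hf)]
  rfl

end MeanEDist

theorem Real.volume_Ico_union_Ico_eq_edist (a b : ℝ) :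
    volume (Ico a b ∪ Ico b a) = edist a b := by
  rw [edist_dist, Real.dist_eq]
  rcases le_total a b with h | h
  · rw [Ico_eq_empty_of_le h, union_empty, Real.volume_Ico, abs_sub_comm,
      abs_of_nonneg (sub_nonneg.2 h)]
  · rw [Ico_eq_empty_of_le h, empty_union, Real.volume_Ico, abs_of_nonneg (sub_nonneg.2 h)]

/-- Slice `{(a, b, t) | t lies between a and b}` once along `t` and once along `(a, b)`. -/
theorem Real.meanEDist_eq_lintegral_Iic_mul_Ioi (μ ν : Measure ℝ) [SFinite μ] [SFinite ν] :
    meanEDist μ ν = ∫⁻ t, μ (Iic t) * ν (Ioi t) + μ (Ioi t) * ν (Iic t) := by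
  set S : Set ((ℝ × ℝ) × ℝ) :=
    {q | q.1.1 ≤ q.2 ∧ q.2 < q.1.2} ∪ {q | q.2 < q.1.1 ∧ q.1.2 ≤ q.2} with hS
  have hSm : MeasurableSet S := by measurability
  calc meanEDist μ ν = ∫⁻ q, edist q.1 q.2 ∂(μ.prod ν) := meanEDist_eq_lintegral_prod μ ν
    _ = ∫⁻ q, volume (Prod.mk q ⁻¹' S) ∂(μ.prod ν) := by
        congr! with q
        rw [← Real.volume_Ico_union_Ico_eq_edist]
        congr 1
        ext t
        simp [hS, and_comm]
    _ = (μ.prod ν).prod volume S := (Measure.prod_apply hSm).symm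
    _ = ∫⁻ t, μ.prod ν (Iic t ×ˢ Ioi t ∪ Ioi t ×ˢ Iic t) := Measure.prod_apply_symm hSm
    _ = _ := by
        congr! with t
        rw [measure_union (disjoint_prod.2 (.inl (Iic_disjoint_Ioi le_rfl)))
          (measurableSet_Ioi.prod measurableSet_Iic), Measure.prod_prod, Measure.prod_prod]

theorem Real.meanEDist_add_meanEDist_le (μ ν : Measure ℝ) [IsProbabilityMeasure μ]
    [IsProbabilityMeasure ν] :
    meanEDist μ μ + meanEDist ν ν ≤ 2 * meanEDist μ ν := by
  simp only [Real.meanEDist_eq_lintegral_Iic_mul_Ioi]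
  refine (le_lintegral_add _ _).trans ?_
  rw [← lintegral_const_mul' _ _ (by norm_num)]
  refine lintegral_mono fun t => ?_
  have h := measure_mul_measure_compl_add_le μ ν (measurableSet_Iic (a := t))
  rw [compl_Iic] at h
  calc _ = 2 * (μ (Iic t) * μ (Ioi t) + ν (Iic t) * ν (Ioi t)) := by ring
    _ ≤ 2 * (μ (Iic t) * ν (Ioi t) + ν (Iic t) * μ (Ioi t)) := by gcongr
    _ = _ := by ring

section InnerProductSpace

variable {E : Type*} [NormedAddCommGroup E] [InnerProductSpace ℝ E] [FiniteDimensional ℝ E]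
  [MeasurableSpace E] [BorelSpace E]

noncomputable def ballAbsInner (z : E) : ℝ≥0∞ :=
  ∫⁻ w in closedBall (0 : E) 1, ‖⟪w, z⟫‖ₑ

theorem ballAbsInner_ne_top (z : E) : ballAbsInner z ≠ ∞ := by
  refine ne_top_of_le_ne_top ?_
    (setLIntegral_mono (g := fun _ => ‖z‖ₑ) measurable_const fun w hw => ?_)
  · rw [setLIntegral_const]
    exact ENNReal.mul_ne_top enorm_ne_top measure_closedBall_lt_top.ne
  · rw [enorm_le_iff_norm_le]
    calc ‖⟪w, z⟫‖ ≤ ‖w‖ * ‖z‖ := norm_inner_le_norm w z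
      _ ≤ 1 * ‖z‖ := by gcongr; exact mem_closedBall_zero_iff.1 hw
      _ = ‖z‖ := one_mul _

theorem ballAbsInner_pos {u : E} (hu : ‖u‖ = 1) : 0 < ballAbsInner u := by
  rw [ballAbsInner, lintegral_pos_iff_support (by fun_prop)]
  have hU : IsOpen (ball (0 : E) 1 ∩ {w | ⟪w, u⟫ ≠ 0}) :=
    isOpen_ball.inter (isOpen_ne_fun (by fun_prop) (by fun_prop))
  have hhalf : (2⁻¹ : ℝ) • u ∈ ball (0 : E) 1 ∩ {w | ⟪w, u⟫ ≠ 0} := by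
    norm_num [norm_smul, hu, real_inner_smul_left]
  calc 0 < volume (ball (0 : E) 1 ∩ {w | ⟪w, u⟫ ≠ 0}) := hU.measure_pos _ ⟨_, hhalf⟩
    _ ≤ _ := by
      rw [Measure.restrict_apply' measurableSet_closedBall]
      exact measure_mono fun w hw => ⟨by simpa using hw.2, ball_subset_closedBall hw.1⟩

theorem ballAbsInner_eq_enorm_mul {u : E} (hu : ‖u‖ = 1) (z : E) :
    ballAbsInner z = ‖z‖ₑ * ballAbsInner u := by
  obtain rfl | hz := eq_or_ne z 0
  · simp [ballAbsInner]
  have hz' : ‖z‖ ≠ 0 := norm_ne_zero_iff.2 hz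
  -- a reflection taking `u` to `z / ‖z‖` preserves the ball and Lebesgue measure
  set R : E ≃ₗᵢ[ℝ] E := (ℝ ∙ (u - ‖z‖⁻¹ • z))ᗮ.reflection
  have hR : R (‖z‖ • u) = z := by
    rw [LinearIsometryEquiv.map_smul, Submodule.reflection_sub, smul_smul,
      mul_inv_cancel₀ hz', one_smul]
    rw [hu, norm_smul, norm_inv, norm_norm, inv_mul_cancel₀ hz']
  have hinner (w : E) : ⟪R w, z⟫ = ‖z‖ * ⟪w, u⟫ := by
    conv_lhs => rw [← hR]
    rw [R.inner_map_map, real_inner_smul_right]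
  have hB : R ⁻¹' closedBall 0 1 = closedBall 0 1 := by
    rw [LinearIsometryEquiv.preimage_closedBall, map_zero]
  calc ballAbsInner z = ∫⁻ w in closedBall (0 : E) 1, ‖⟪R w, z⟫‖ₑ := by
        rw [ballAbsInner, ← R.measurePreserving.setLIntegral_comp_preimage_emb
          R.toHomeomorph.measurableEmbedding, hB]
    _ = ∫⁻ w in closedBall (0 : E) 1, ‖z‖ₑ * ‖⟪w, u⟫‖ₑ := by
        congr! with w
        rw [hinner, enorm_mul, enorm_norm]
    _ = ‖z‖ₑ * ballAbsInner u := lintegral_const_mul' _ _ enorm_ne_top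

theorem ballAbsInner_mul_meanEDist {u : E} (hu : ‖u‖ = 1) (κ l : Measure E) [SFinite κ]
    [SFinite l] :
    ballAbsInner u * meanEDist κ l
      = ∫⁻ w in closedBall (0 : E) 1, meanEDist (κ.map (⟪w, ·⟫)) (l.map (⟪w, ·⟫)) := by
  calc ballAbsInner u * meanEDist κ l
        = ∫⁻ q, (∫⁻ w in closedBall (0 : E) 1, ‖⟪w, q.1 - q.2⟫‖ₑ) ∂(κ.prod l) := by
        rw [meanEDist_eq_lintegral_prod, ← lintegral_const_mul' _ _ (ballAbsInner_ne_top u)]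
        congr! with q
        rw [edist_eq_enorm_sub, mul_comm, ← ballAbsInner_eq_enorm_mul hu, ballAbsInner]
    _ = ∫⁻ w in closedBall (0 : E) 1, ∫⁻ q, ‖⟪w, q.1 - q.2⟫‖ₑ ∂(κ.prod l) :=
        lintegral_lintegral_swap (Measurable.aemeasurable (by fun_prop))
    _ = _ := by
        congr! with w
        rw [meanEDist_map (by fun_prop)]
        simp only [edist_eq_enorm_sub, inner_sub_right]

theorem meanEDist_add_meanEDist_le (κ l : Measure E) [IsProbabilityMeasure κ]
    [IsProbabilityMeasure l] :
    meanEDist κ κ + meanEDist l l ≤ 2 * meanEDist κ l := by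
  rcases subsingleton_or_nontrivial E with hE | hE
  · simp [meanEDist, Subsingleton.elim _ (0 : E)]
  obtain ⟨u, hu⟩ := exists_norm_eq E zero_le_one
  rw [← ENNReal.mul_le_mul_iff_right (ballAbsInner_pos hu).ne' (ballAbsInner_ne_top u),
    mul_add, mul_left_comm, ballAbsInner_mul_meanEDist hu, ballAbsInner_mul_meanEDist hu,
    ballAbsInner_mul_meanEDist hu, ← lintegral_const_mul' _ _ (by norm_num)]
  refine (le_lintegral_add _ _).trans (lintegral_mono fun w => ?_)
  have hw : Measurable (⟪w, ·⟫ : E → ℝ) := by fun_prop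
  have := Measure.isProbabilityMeasure_map (μ := κ) hw.aemeasurable
  have := Measure.isProbabilityMeasure_map (μ := l) hw.aemeasurable
  exact Real.meanEDist_add_meanEDist_le _ _

end InnerProductSpace

section FirstMoment

variable {E : Type*} [NormedAddCommGroup E] [MeasurableSpace E] [BorelSpace E]
  [SecondCountableTopology E] {μ ν : Measure E} [IsFiniteMeasure μ] [IsFiniteMeasure ν]

theorem integrable_fst_sub_snd (hμ : Integrable (‖·‖) μ) (hν : Integrable (‖·‖) ν) :
    Integrable (fun q : E × E => q.1 - q.2) (μ.prod ν) :=
  (((integrable_norm_iff aestronglyMeasurable_id).1 hμ).comp_fst ν).sub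
    (((integrable_norm_iff aestronglyMeasurable_id).1 hν).comp_snd μ)

theorem meanEDist_ne_top (hμ : Integrable (‖·‖) μ) (hν : Integrable (‖·‖) ν) :
    meanEDist μ ν ≠ ∞ := by
  rw [meanEDist_eq_lintegral_prod]
  simpa only [edist_eq_enorm_sub] using (integrable_fst_sub_snd hμ hν).hasFiniteIntegral.ne

theorem integral_integral_norm_sub_eq_toReal_meanEDist (hμ : Integrable (‖·‖) μ)
    (hν : Integrable (‖·‖) ν) :
    ∫ x, ∫ y, ‖x - y‖ ∂ν ∂μ = (meanEDist μ ν).toReal := by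
  rw [← integral_prod (fun q : E × E => ‖q.1 - q.2‖) (integrable_fst_sub_snd hμ hν).norm,
    integral_norm_eq_lintegral_enorm (by fun_prop), meanEDist_eq_lintegral_prod]
  simp only [edist_eq_enorm_sub]

end FirstMoment

theorem integral_integral_norm_sub_add_le {E : Type*} [NormedAddCommGroup E]
    [InnerProductSpace ℝ E] [FiniteDimensional ℝ E] [MeasurableSpace E] [BorelSpace E]
    (κ l : Measure E) [IsProbabilityMeasure κ] [IsProbabilityMeasure l]
    (hκ : Integrable (‖·‖) κ) (hl : Integrable (‖·‖) l) :
    (∫ x, ∫ x', ‖x - x'‖ ∂κ ∂κ) + (∫ y, ∫ y', ‖y - y'‖ ∂l ∂l)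
      ≤ 2 * ∫ x, ∫ y, ‖x - y‖ ∂l ∂κ := by
  rw [integral_integral_norm_sub_eq_toReal_meanEDist hκ hκ,
    integral_integral_norm_sub_eq_toReal_meanEDist hl hl,
    integral_integral_norm_sub_eq_toReal_meanEDist hκ hl,
    ← ENNReal.toReal_add (meanEDist_ne_top hκ hκ) (meanEDist_ne_top hl hl),
    ← ENNReal.toReal_ofNat 2, ← ENNReal.toReal_mul]
  exact ENNReal.toReal_mono (ENNReal.mul_ne_top (by norm_num) (meanEDist_ne_top hκ hl))
    (meanEDist_add_meanEDist_le κ l)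

/-- The energy distance `E(F,G) = 2 E‖X−Y‖ − E‖Y−Y'‖ − E‖X−X'‖`
(with `X,X' ~ G` i.i.d., `Y,Y' ~ F` i.i.d., all independent) is nonnegative
for distributions on `ℝ^p` with finite first moments. -/
theorem energy_distance_nonneg (p : ℕ)
    (F G : Measure (EuclideanSpace ℝ (Fin p)))
    [IsProbabilityMeasure F] [IsProbabilityMeasure G]
    (hF : Integrable (fun y => ‖y‖) F) (hG : Integrable (fun x => ‖x‖) G) :
    0 ≤ 2 * (∫ x, ∫ y, ‖x - y‖ ∂F ∂G)
      - (∫ y, ∫ y', ‖y - y'‖ ∂F ∂F)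
      - (∫ x, ∫ x', ‖x - x'‖ ∂G ∂G) := by
  linarith [integral_integral_norm_sub_add_le G F hG hF]
end

section
/- For fixed x ∈ [0,1]^p and λ > 0, if θ₁,…,θ_p are i.i.d. Exponential(λ) and Y is uniform on [0,1]^p, independent of θ, then E[exp(−Σ_l θ_l (x_l − Y_l)²)] = λ^{p/2} ∏_{l=1}^p φ(x_l; λ), where φ(x;λ) = arctan(x/√λ) + arctan((1−x)/√λ). -/
/-!
Both integrands factor over the coordinates, so by Fubini the `p`-dimensional integral is a
product of one-dimensional ones. In one dimension, exchanging the `θ`- and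
`y`-integrals turns the inner integral into the Laplace transform of the `Exp(λ)` density,
`λ / ((x - y)² + λ)`, whose integral over `[0, 1]` is `√λ (arctan (x/√λ) + arctan ((1-x)/√λ))`.
-/

open MeasureTheory Set Real

theorem setIntegral_univ_pi_prod {ι 𝕜 : Type*} [Fintype ι] [RCLike 𝕜] {E : ι → Type*}
    {mE : ∀ i, MeasurableSpace (E i)} (μ : ∀ i, Measure (E i)) [∀ i, SigmaFinite (μ i)]
    (s : ∀ i, Set (E i)) (f : ∀ i, E i → 𝕜) :
    ∫ x in univ.pi s, ∏ i, f i (x i) ∂Measure.pi μ = ∏ i, ∫ x in s i, f i x ∂μ i := by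
  rw [Measure.restrict_pi_pi]
  exact integral_fintype_prod_eq_prod f

theorem integral_exp_neg_mul_Ioi_zero {b : ℝ} (hb : 0 < b) :
    ∫ t in Ioi (0 : ℝ), exp (-b * t) = 1 / b := by
  rw [integral_exp_mul_Ioi (neg_lt_zero.mpr hb), mul_zero, exp_zero, div_neg, neg_div]
  ring

theorem integral_div_sub_sq_add (a b c : ℝ) {lam : ℝ} (hlam : 0 < lam) :
    ∫ y in a..b, lam / ((c - y) ^ 2 + lam)
      = √lam * (arctan ((c - a) / √lam) - arctan ((c - b) / √lam)) := by
  have hs : √lam ≠ 0 := (sqrt_pos.mpr hlam).ne'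
  have hrw : ∀ y,
      lam / ((c - y) ^ 2 + lam) = (fun u => 1 / (1 + u ^ 2)) (c / √lam - y / √lam) := by
    intro y
    have := sq_sqrt hlam.le
    field_simp
    rw [this]
    ring
  simp_rw [hrw]
  rw [intervalIntegral.integral_comp_sub_div (fun u : ℝ => 1 / (1 + u ^ 2)) hs,
    integral_one_div_one_add_sq, smul_eq_mul, sub_div, sub_div]

theorem integral_Ioi_exp_neg_mul_mul_exp_neg_mul {a lam : ℝ} (h : 0 < a + lam) :
    ∫ t in Ioi (0 : ℝ), exp (-(t * a)) * (lam * exp (-lam * t)) = lam / (a + lam) := by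
  have hexp : ∀ t, exp (-(t * a)) * (lam * exp (-lam * t)) = lam * exp (-(a + lam) * t) := by
    intro t
    rw [mul_left_comm, ← exp_add]
    ring_nf
  simp_rw [hexp]
  rw [integral_const_mul, integral_exp_neg_mul_Ioi_zero h, mul_one_div]

theorem integral_Ioi_integral_exp_neg_mul_mul_exp_neg_mul {α : Type*} [MeasurableSpace α]
    (ν : Measure α) [IsFiniteMeasure ν] {g : α → ℝ} (hg : Measurable g) (hg₀ : ∀ y, 0 ≤ g y)
    {lam : ℝ} (hlam : 0 < lam) :
    ∫ t in Ioi (0 : ℝ), (∫ y, exp (-(t * g y)) ∂ν) * (lam * exp (-lam * t))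
      = ∫ y, lam / (g y + lam) ∂ν := by
  have hdensity : Integrable (fun t : ℝ => lam * exp (-lam * t)) (volume.restrict (Ioi 0)) :=
    (exp_neg_integrableOn_Ioi 0 hlam).const_mul lam
  have hint : Integrable (Function.uncurry fun t y => exp (-(t * g y)) * (lam * exp (-lam * t)))
      ((volume.restrict (Ioi 0)).prod ν) := by
    refine (hdensity.mul_prod (integrable_const (1 : ℝ))).mono ?_ ?_
    · exact (by fun_prop : Measurable _).aestronglyMeasurable
    · filter_upwards [Measure.quasiMeasurePreserving_fst.ae (ae_restrict_mem measurableSet_Ioi)]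
        with z (hz : 0 < z.1)
      have hdecay : exp (-(z.1 * g z.2)) ≤ 1 := exp_le_one_iff.mpr (by nlinarith [hg₀ z.2])
      simp only [Function.uncurry, norm_mul, mul_one, Real.norm_eq_abs, abs_exp]
      exact mul_le_of_le_one_left (by positivity) hdecay
  calc ∫ t in Ioi (0 : ℝ), (∫ y, exp (-(t * g y)) ∂ν) * (lam * exp (-lam * t))
      = ∫ t in Ioi (0 : ℝ), ∫ y, exp (-(t * g y)) * (lam * exp (-lam * t)) ∂ν := by
        simp_rw [integral_mul_const]
    _ = ∫ y, (∫ t in Ioi (0 : ℝ), exp (-(t * g y)) * (lam * exp (-lam * t))) ∂ν :=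
        integral_integral_swap hint
    _ = ∫ y, lam / (g y + lam) ∂ν := by
        congr 1 with y
        exact integral_Ioi_exp_neg_mul_mul_exp_neg_mul (by linarith [hg₀ y])

theorem expectation_gaussian_kernel_uniform_exponential_general (p : ℕ) (lam : ℝ) (hlam : 0 < lam)
    (x : Fin p → ℝ) :
    ∫ θ in Set.univ.pi fun _ : Fin p => Set.Ioi (0 : ℝ),
      ((∫ y in Set.univ.pi fun _ : Fin p => Set.Icc (0 : ℝ) 1,
          Real.exp (-∑ l, θ l * (x l - y l) ^ 2))
        * ∏ l, lam * Real.exp (-lam * θ l))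
    = Real.sqrt lam ^ p *
        ∏ l, (Real.arctan (x l / Real.sqrt lam)
          + Real.arctan ((1 - x l) / Real.sqrt lam)) := by
  have hfactor : ∀ θ : Fin p → ℝ,
      (∫ y in univ.pi fun _ : Fin p => Icc (0 : ℝ) 1, exp (-∑ l, θ l * (x l - y l) ^ 2))
        * ∏ l, lam * exp (-lam * θ l)
      = ∏ l, (∫ y in Icc (0 : ℝ) 1, exp (-(θ l * (x l - y) ^ 2))) * (lam * exp (-lam * θ l)) := by
    intro θ
    simp_rw [← Finset.sum_neg_distrib, exp_sum]
    rw [volume_pi, setIntegral_univ_pi_prod (fun _ => volume) _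
      (fun l y => exp (-(θ l * (x l - y) ^ 2)))]
    exact Finset.prod_mul_distrib.symm
  have hcoord : ∀ c : ℝ,
      ∫ t in Ioi (0 : ℝ), (∫ y in Icc (0 : ℝ) 1, exp (-(t * (c - y) ^ 2))) * (lam * exp (-lam * t))
      = √lam * (arctan (c / √lam) + arctan ((1 - c) / √lam)) := by
    intro c
    rw [integral_Ioi_integral_exp_neg_mul_mul_exp_neg_mul _ (by fun_prop)
        (fun _ => sq_nonneg _) hlam,
      integral_Icc_eq_integral_Ioc, ← intervalIntegral.integral_of_le zero_le_one,
      integral_div_sub_sq_add _ _ _ hlam, sub_zero, ← neg_sub 1 c, neg_div, arctan_neg,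
      sub_neg_eq_add]
  simp_rw [hfactor]
  rw [volume_pi, setIntegral_univ_pi_prod (fun _ => volume) _
    (fun l t => (∫ y in Icc (0 : ℝ) 1, exp (-(t * (x l - y) ^ 2))) * (lam * exp (-lam * t)))]
  simp_rw [hcoord]
  rw [Finset.prod_mul_distrib, Finset.prod_const, Finset.card_univ, Fintype.card_fin]

/-- For fixed `x ∈ [0,1]^p` and `λ > 0`, with `θ₁,…,θ_p` i.i.d. `Exponential(λ)` and
`Y` uniform on `[0,1]^p` independent of `θ`,
`E[exp(−Σ_l θ_l (x_l − Y_l)²)] = λ^{p/2} Π_l φ(x_l; λ)`, where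
`φ(x;λ) = arctan(x/√λ) + arctan((1−x)/√λ)`. -/
theorem expectation_gaussian_kernel_uniform_exponential (p : ℕ) (lam : ℝ) (hlam : 0 < lam)
    (x : Fin p → ℝ) (hx : ∀ l, x l ∈ Set.Icc (0 : ℝ) 1) :
    ∫ θ in Set.univ.pi fun _ : Fin p => Set.Ioi (0 : ℝ),
      ((∫ y in Set.univ.pi fun _ : Fin p => Set.Icc (0 : ℝ) 1,
          Real.exp (-∑ l, θ l * (x l - y l) ^ 2))
        * ∏ l, lam * Real.exp (-lam * θ l))
    = Real.sqrt lam ^ p *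
        ∏ l, (Real.arctan (x l / Real.sqrt lam)
          + Real.arctan ((1 - x l) / Real.sqrt lam)) :=
  expectation_gaussian_kernel_uniform_exponential_general p lam hlam x
end

section
/- The function k(x,y) = ‖x‖₂ + ‖y‖₂ − ‖x−y‖₂ on ℝ^p × ℝ^p is a positive semi-definite kernel: for any points x₁,…,xₙ ∈ ℝ^p and real coefficients c₁,…,cₙ, Σᵢ Σⱼ cᵢ cⱼ k(xᵢ,xⱼ) ≥ 0. -/
/-!
Writing `t = s²`, the Gaussian kernel `exp (-t‖x - y‖²)` is positive semi-definite, being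
`exp (-t‖x‖²) exp (-t‖y‖²)` times `exp (2t⟪x, y⟫)`, a series with nonnegative coefficients in
the Gram-type kernels `⟪x, y⟫ ^ k`. Centering it at `0` and integrating against `ds / s²` over
`ℝ` gives `C (‖x‖ + ‖y‖ - ‖x - y‖)`, because
`∫ (1 - exp (-(a s)²)) / s² ds = |a| ∫ (1 - exp (-u²)) / u² du =: |a| C` with `0 < C < ∞`.
-/

open Finset MeasureTheory Real

def IsPosSemidefKernel {α : Type*} (K : α → α → ℝ) : Prop :=
  ∀ (n : ℕ) (x : Fin n → α) (c : Fin n → ℝ), 0 ≤ ∑ i, ∑ j, c i * c j * K (x i) (x j)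

namespace IsPosSemidefKernel

variable {α : Type*} {K : α → α → ℝ}

theorem of_sum_mul {ι : Type*} [Fintype ι] (φ : α → ι → ℝ) :
    IsPosSemidefKernel fun x y => ∑ a, φ x a * φ y a := by
  intro n x c
  have h : ∑ a, (∑ i, c i * φ (x i) a) ^ 2
      = ∑ i, ∑ j, c i * c j * ∑ a, φ (x i) a * φ (x j) a := by
    simp_rw [sq, sum_mul_sum, mul_sum]
    rw [sum_comm]
    refine sum_congr rfl fun i _ => ?_
    rw [sum_comm]
    exact sum_congr rfl fun j _ => sum_congr rfl fun a _ => by ring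
  rw [← h]
  exact sum_nonneg fun a _ => sq_nonneg _

theorem pow_of_sum_mul {ι : Type*} [Fintype ι] (φ : α → ι → ℝ) (k : ℕ) :
    IsPosSemidefKernel fun x y => (∑ a, φ x a * φ y a) ^ k := by
  have h : ∀ x y, (∑ a, φ x a * φ y a) ^ k
      = ∑ f : Fin k → ι, (∏ m, φ x (f m)) * ∏ m, φ y (f m) := fun x y => by
    simp_rw [Fintype.sum_pow, prod_mul_distrib]
  simpa only [h] using of_sum_mul fun x (f : Fin k → ι) => ∏ m, φ x (f m)

theorem inner_pow {E : Type*} [NormedAddCommGroup E] [InnerProductSpace ℝ E]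
    [FiniteDimensional ℝ E] (k : ℕ) :
    IsPosSemidefKernel fun x y : E => inner ℝ x y ^ k := by
  set b := stdOrthonormalBasis ℝ E
  have h : ∀ x y : E, ∑ i, inner ℝ x (b i) * inner ℝ y (b i) = inner ℝ x y := fun x y => by
    simpa only [real_inner_comm y] using b.sum_inner_mul_inner x y
  simpa only [h] using pow_of_sum_mul (fun x i => inner ℝ x (b i)) k

theorem of_hasSum {L : ℕ → α → α → ℝ} (hL : ∀ k, IsPosSemidefKernel (L k))
    (hK : ∀ x y, HasSum (fun k => L k x y) (K x y)) : IsPosSemidefKernel K := by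
  intro n x c
  exact (hasSum_sum fun i _ => hasSum_sum fun j _ => (hK (x i) (x j)).mul_left _).nonneg
    fun k => hL k n x c

theorem integral {β : Type*} [MeasurableSpace β] {μ : Measure β} {L : β → α → α → ℝ}
    (hL : ∀ t, IsPosSemidefKernel (L t)) (hint : ∀ x y, Integrable (fun t => L t x y) μ) :
    IsPosSemidefKernel fun x y => ∫ t, L t x y ∂μ := by
  intro n x c
  have h : ∫ t, ∑ i, ∑ j, c i * c j * L t (x i) (x j) ∂μ
      = ∑ i, ∑ j, c i * c j * ∫ t, L t (x i) (x j) ∂μ := by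
    rw [integral_finsetSum _ fun i _ => integrable_finsetSum _ fun j _ => (hint _ _).const_mul _]
    refine sum_congr rfl fun i _ => ?_
    rw [integral_finsetSum _ fun j _ => (hint _ _).const_mul _]
    simp_rw [integral_const_mul]
  rw [← h]
  exact integral_nonneg fun t => hL t n x c

theorem const_mul (hK : IsPosSemidefKernel K) {r : ℝ} (hr : 0 ≤ r) :
    IsPosSemidefKernel fun x y => r * K x y := by
  intro n x c
  have h : ∑ i, ∑ j, c i * c j * (r * K (x i) (x j))
      = r * ∑ i, ∑ j, c i * c j * K (x i) (x j) := by
    simp only [mul_sum]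
    exact sum_congr rfl fun i _ => sum_congr rfl fun j _ => by ring
  rw [h]
  exact mul_nonneg hr (hK n x c)

theorem of_const_mul {r : ℝ} (hr : 0 < r) (hK : IsPosSemidefKernel fun x y => r * K x y) :
    IsPosSemidefKernel K := by
  simpa only [← mul_assoc, inv_mul_cancel₀ hr.ne', one_mul] using hK.const_mul (inv_nonneg.2 hr.le)

theorem mul_mul (hK : IsPosSemidefKernel K) (f : α → ℝ) :
    IsPosSemidefKernel fun x y => f x * f y * K x y := by
  intro n x c
  convert hK n x fun i => c i * f (x i) using 3
  ring

theorem sub_sub_add (hK : IsPosSemidefKernel K) (x₀ : α) :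
    IsPosSemidefKernel fun x y => K x y - K x x₀ - K x₀ y + K x₀ x₀ := by
  intro n x c
  convert hK (n + 1) (Fin.cons x₀ x) (Fin.cons (-∑ i, c i) c) using 1
  simp only [Fin.sum_univ_succ, Fin.cons_zero, Fin.cons_succ, mul_sub, mul_add, sum_add_distrib,
    sum_sub_distrib, ← sum_mul, ← mul_sum, sum_neg_distrib, neg_mul, mul_neg, mul_assoc]
  ring

section InnerProductSpace

variable {E : Type*} [NormedAddCommGroup E] [InnerProductSpace ℝ E] [FiniteDimensional ℝ E]

theorem exp_mul_inner {r : ℝ} (hr : 0 ≤ r) :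
    IsPosSemidefKernel fun x y : E => exp (r * inner ℝ x y) := by
  refine of_hasSum (fun k => (inner_pow k).const_mul (by positivity : 0 ≤ r ^ k / k.factorial))
    fun x y => ?_
  have h : HasSum (fun k => (r * inner ℝ x y) ^ k / k.factorial) (exp (r * inner ℝ x y)) := by
    rw [exp_eq_exp_ℝ]
    exact NormedSpace.expSeries_div_hasSum_exp _
  convert h using 2 with k
  ring

theorem exp_neg_mul_norm_sub_sq {t : ℝ} (ht : 0 ≤ t) :
    IsPosSemidefKernel fun x y : E => exp (-(t * ‖x - y‖ ^ 2)) := by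
  have h : ∀ x y : E, exp (-(t * ‖x - y‖ ^ 2))
      = exp (-(t * ‖x‖ ^ 2)) * exp (-(t * ‖y‖ ^ 2)) * exp (2 * t * inner ℝ x y) := fun x y => by
    rw [norm_sub_sq_real, ← exp_add, ← exp_add]
    congr 1
    ring
  simpa only [h] using (exp_mul_inner (E := E) (by positivity : 0 ≤ 2 * t)).mul_mul
    fun x => exp (-(t * ‖x‖ ^ 2))

end InnerProductSpace

end IsPosSemidefKernel

theorem one_sub_exp_neg_div_le_two_div_one_add {v : ℝ} (hv : 0 ≤ v) :
    (1 - exp (-v)) / v ≤ 2 / (1 + v) := by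
  rcases hv.eq_or_lt with rfl | hv
  · norm_num
  have h₁ : 1 - exp (-v) ≤ v := by linarith [add_one_le_exp (-v)]
  have h₂ : 1 - exp (-v) ≤ 1 := by linarith [exp_pos (-v)]
  rw [div_le_div_iff₀ hv (by linarith)]
  nlinarith

theorem integrable_one_sub_exp_neg_sq_div_sq :
    Integrable fun u : ℝ => (1 - exp (-u ^ 2)) / u ^ 2 := by
  have hmeas : Measurable fun u : ℝ => (1 - exp (-u ^ 2)) / u ^ 2 := by fun_prop
  refine (integrable_inv_one_add_sq.const_mul 2).mono' hmeas.aestronglyMeasurable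
    (ae_of_all _ fun u => ?_)
  have hnum : 0 ≤ 1 - exp (-u ^ 2) := by
    linarith [exp_le_one_iff.2 (neg_nonpos.2 (sq_nonneg u))]
  rw [norm_of_nonneg (div_nonneg hnum (sq_nonneg u)), ← div_eq_mul_inv]
  exact one_sub_exp_neg_div_le_two_div_one_add (sq_nonneg u)

theorem integral_one_sub_exp_neg_sq_div_sq_pos :
    0 < ∫ u : ℝ, (1 - exp (-u ^ 2)) / u ^ 2 := by
  have hpos : ∀ u : ℝ, u ≠ 0 → 0 < (1 - exp (-u ^ 2)) / u ^ 2 := fun u hu => by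
    have hu2 : 0 < u ^ 2 := by positivity
    exact div_pos (by linarith [exp_lt_one_iff.2 (neg_lt_zero.2 hu2)]) hu2
  have hnonneg : 0 ≤ fun u : ℝ => (1 - exp (-u ^ 2)) / u ^ 2 := fun u => by
    rcases eq_or_ne u 0 with rfl | hu
    · simp
    · exact (hpos u hu).le
  rw [integral_pos_iff_support_of_nonneg hnonneg integrable_one_sub_exp_neg_sq_div_sq]
  have hsupp : Set.Ioi 0 ⊆ Function.support fun u : ℝ => (1 - exp (-u ^ 2)) / u ^ 2 :=
    fun u hu => (hpos u (ne_of_gt hu)).ne'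
  exact (by simp : (0 : ENNReal) < volume (Set.Ioi (0 : ℝ))).trans_le (measure_mono hsupp)

theorem one_sub_exp_neg_mul_sq_div_sq (a s : ℝ) :
    (1 - exp (-(a * s) ^ 2)) / s ^ 2 = a ^ 2 * ((1 - exp (-(a * s) ^ 2)) / (a * s) ^ 2) := by
  rcases eq_or_ne a 0 with rfl | ha
  · simp
  rcases eq_or_ne s 0 with rfl | hs
  · simp
  field_simp

theorem integrable_one_sub_exp_neg_mul_sq_div_sq (a : ℝ) :
    Integrable fun s : ℝ => (1 - exp (-(a * s) ^ 2)) / s ^ 2 := by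
  rcases eq_or_ne a 0 with rfl | ha
  · simp
  simp_rw [one_sub_exp_neg_mul_sq_div_sq a]
  exact (integrable_one_sub_exp_neg_sq_div_sq.comp_mul_left' ha).const_mul _

theorem integral_one_sub_exp_neg_mul_sq_div_sq (a : ℝ) :
    ∫ s : ℝ, (1 - exp (-(a * s) ^ 2)) / s ^ 2 = |a| * ∫ u : ℝ, (1 - exp (-u ^ 2)) / u ^ 2 := by
  simp_rw [one_sub_exp_neg_mul_sq_div_sq a]
  rw [integral_const_mul, Measure.integral_comp_mul_left (fun u => (1 - exp (-u ^ 2)) / u ^ 2),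
    smul_eq_mul, ← mul_assoc, abs_inv, ← sq_abs]
  rcases eq_or_ne a 0 with rfl | ha
  · simp
  field_simp

open IsPosSemidefKernel in
theorem isPosSemidefKernel_norm_add_norm_sub_norm_sub {E : Type*} [NormedAddCommGroup E]
    [InnerProductSpace ℝ E] [FiniteDimensional ℝ E] :
    IsPosSemidefKernel fun x y : E => ‖x‖ + ‖y‖ - ‖x - y‖ := by
  set φ : ℝ → ℝ → ℝ := fun a s => (1 - exp (-(a * s) ^ 2)) / s ^ 2 with hφ
  have hφint : ∀ a, Integrable (φ a) := integrable_one_sub_exp_neg_mul_sq_div_sq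
  have hK : ∀ s, IsPosSemidefKernel fun x y : E => φ ‖x‖ s + φ ‖y‖ s - φ ‖x - y‖ s := by
    intro s
    convert ((exp_neg_mul_norm_sub_sq (E := E) (sq_nonneg s)).sub_sub_add 0).const_mul
      (inv_nonneg.2 (sq_nonneg s)) using 3 with x y
    simp only [hφ, mul_pow, sub_zero, zero_sub, sub_self, norm_neg, norm_zero, zero_pow two_ne_zero,
      mul_zero, neg_zero, exp_zero]
    ring_nf
  have hadd : ∀ a b, Integrable fun s => φ a s + φ b s := fun a b => (hφint a).add (hφint b)
  have hint : ∀ x y : E, Integrable fun s => φ ‖x‖ s + φ ‖y‖ s - φ ‖x - y‖ s := fun x y =>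
    (hadd _ _).sub (hφint _)
  refine of_const_mul integral_one_sub_exp_neg_sq_div_sq_pos ?_
  convert integral hK hint using 3 with x y
  rw [integral_sub (hadd _ _) (hφint _), integral_add (hφint _) (hφint _)]
  simp only [hφ, integral_one_sub_exp_neg_mul_sq_div_sq, abs_norm]
  ring

/-- The kernel `k(x,y) = ‖x‖ + ‖y‖ − ‖x−y‖` on `ℝ^p × ℝ^p` is positive semi-definite:
for any points `x₁,…,xₙ` and real coefficients `c₁,…,cₙ`,
`Σᵢ Σⱼ cᵢ cⱼ k(xᵢ,xⱼ) ≥ 0`. -/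
theorem bm_kernel_posSemidef (p n : ℕ)
    (x : Fin n → EuclideanSpace ℝ (Fin p)) (c : Fin n → ℝ) :
    0 ≤ ∑ i, ∑ j, c i * c j * (‖x i‖ + ‖x j‖ - ‖x i - x j‖) :=
  isPosSemidefKernel_norm_add_norm_sub_norm_sub n x c
end
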